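/- arXiv:2102.04863 — 2 statements merged into one kernel-verified Lean document; each statement's English description precedes it below -/
import Mathlib

section
/- The pre-processed improvement is monotone under left composition with free channels: for every channel Θ and every detection incoherent channel Θ_DI, M_{λ,φ}(Θ_DI ∘ Θ) ≤ M_{λ,φ}(Θ). -/
open Matrix Complex
open scoped ComplexOrder

/-- A superoperator: a ℂ-linear map from operators on `ι` to operators on `κ`. -/
abbrev SO (ι κ : Type*) [Fintype ι] [DecidableEq ι] [Fintype κ] [DecidableEq κ] :=
  Matrix ι ι ℂ →ₗ[ℂ] Matrix κ κ ℂ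

/-- Choi matrix of a superoperator. -/
noncomputable def choi {ι κ : Type*} [Fintype ι] [DecidableEq ι] [Fintype κ] [DecidableEq κ]
    (Θ : SO ι κ) : Matrix (κ × ι) (κ × ι) ℂ :=
  Matrix.of fun p q => Θ (Matrix.single p.2 q.2 1) p.1 q.1

/-- A quantum state: positive semidefinite with unit trace. -/
def IsState {ι : Type*} [Fintype ι] (ρ : Matrix ι ι ℂ) : Prop := ρ.PosSemidef ∧ ρ.trace = 1

/-- A quantum channel: completely positive (PSD Choi matrix) and trace preserving. -/
def IsChannel {ι κ : Type*} [Fintype ι] [DecidableEq ι] [Fintype κ] [DecidableEq κ]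
    (Θ : SO ι κ) : Prop :=
  (choi Θ).PosSemidef ∧ ∀ ρ, (Θ ρ).trace = ρ.trace

/-- Total dephasing channel in the fixed incoherent basis. -/
noncomputable def deph {ι : Type*} [Fintype ι] [DecidableEq ι] : SO ι ι where
  toFun ρ := Matrix.of fun i j => if i = j then ρ i j else 0
  map_add' := by
    intro x y; ext i j
    by_cases h : i = j <;> simp [h]
  map_smul' := by
    intro c x; ext i j
    by_cases h : i = j <;> simp [h]

/-- Phase-encoding unitary channel `Λ_φ`. -/
noncomputable def phaseCh {ι : Type*} [Fintype ι] [DecidableEq ι] (φ : ι → ℝ) : SO ι ι where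
  toFun ρ := Matrix.of fun i j => Complex.exp (Complex.I * ((φ i : ℂ) - (φ j : ℂ))) * ρ i j
  map_add' := by
    intro x y; ext i j; simp [mul_add]
  map_smul' := by
    intro c x; ext i j; simp; ring

/-- The superoperator `λ·id − (1−λ)·Λ_φ`. -/
noncomputable def diffOp {ι : Type*} [Fintype ι] [DecidableEq ι] (lam : ℝ) (φ : ι → ℝ) :
    SO ι ι :=
  (lam : ℂ) • LinearMap.id - ((1 - lam : ℝ) : ℂ) • phaseCh φ

/-- Trace norm of a matrix: sum of singular values. -/
noncomputable def traceNorm {ι : Type*} [Fintype ι] [DecidableEq ι]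
    (M : Matrix ι ι ℂ) : ℝ :=
  ∑ i, Real.sqrt ((Matrix.isHermitian_conjTranspose_mul_self M).eigenvalues i)

/-- `Θ ⊗ id` acting on a composite system. -/
noncomputable def tensorId {ι κ ν : Type*} [Fintype ι] [DecidableEq ι] [Fintype κ]
    [DecidableEq κ] [Fintype ν] [DecidableEq ν] (Θ : SO ι κ) : SO (ι × ν) (κ × ν) where
  toFun ρ := Matrix.of fun p q =>
    ∑ i, ∑ j, Θ (Matrix.single i j 1) p.1 q.1 * ρ (i, p.2) (j, q.2)
  map_add' := by
    intro x y; ext p q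
    simp [Matrix.add_apply, mul_add, Finset.sum_add_distrib]
  map_smul' := by
    intro c x; ext p q
    simp only [Matrix.of_apply, Matrix.smul_apply, smul_eq_mul, RingHom.id_apply,
      Finset.mul_sum]
    exact Finset.sum_congr rfl fun i _ => Finset.sum_congr rfl fun j _ => by ring

/-- Detection incoherent channels: `Δ Φ = Δ Φ Δ`. -/
def IsDI {ι κ : Type*} [Fintype ι] [DecidableEq ι] [Fintype κ] [DecidableEq κ]
    (Φ : SO ι κ) : Prop :=
  deph ∘ₗ Φ = deph ∘ₗ Φ ∘ₗ deph

/-- Maximally incoherent channels: `Ψ Δ = Δ Ψ Δ`. -/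
def IsMIO {ι κ : Type*} [Fintype ι] [DecidableEq ι] [Fintype κ] [DecidableEq κ]
    (Ψ : SO ι κ) : Prop :=
  Ψ ∘ₗ deph = deph ∘ₗ Ψ ∘ₗ deph

/-- The pre-processed improvement `M_{λ,φ}(Θ)`. -/
noncomputable def Mpre {α β γ : Type*} [Fintype α] [DecidableEq α] [Fintype β] [DecidableEq β]
    [Fintype γ] [DecidableEq γ] (lam : ℝ) (φ : α → ℝ) (Θ : SO β γ) : ℝ :=
  sSup {x : ℝ | ∃ (Φ : SO α β) (ρ : Matrix α α ℂ), IsChannel Φ ∧ IsDI Φ ∧ IsState ρ ∧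
    x = traceNorm (deph (Θ (Φ (diffOp lam φ ρ))))} - |lam - (1 - lam)|

/-- The post-processed improvement `N_{λ,φ}(Θ)`. -/
noncomputable def Npost {α β γ : Type*} [Fintype α] [DecidableEq α] [Fintype β] [DecidableEq β]
    [Fintype γ] [DecidableEq γ] (lam : ℝ) (φ : γ → ℝ) (Θ : SO α β) : ℝ :=
  sSup {x : ℝ | ∃ (Ψ : SO β γ) (ρ : Matrix α α ℂ), IsChannel Ψ ∧ IsMIO Ψ ∧ IsState ρ ∧
    x = traceNorm (diffOp lam φ (Ψ (Θ (deph ρ))))} - |lam - (1 - lam)|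

/-!
On the output of `Δ` the trace norm is the `ℓ¹` norm of the diagonal. Because `Θ_DI` is detection
incoherent, `Δ Θ_DI = Δ Θ_DI Δ`, so on diagonals it acts through the column-stochastic matrix
`(Θ_DI |j⟩⟨j|)ᵢᵢ`, which is an `ℓ¹` contraction. Hence each value in the supremum defining
`M(Θ_DI ∘ Θ)` is dominated by the value for `Θ` at the same `(Φ, ρ)`. The latter supremum is finite:
a PSD matrix with diagonal at most one has all entries of modulus at most one, which bounds both
states and (through their Choi matrices) all channels uniformly.
-/

open Polynomial in
theorem Matrix.IsHermitian.sum_eigenvalues_eq_of_eq_diagonal {n : Type*} [Fintype n]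
    [DecidableEq n] {A : Matrix n n ℂ} (hA : A.IsHermitian) {a : n → ℝ}
    (h : A = diagonal fun i => (a i : ℂ)) (f : ℝ → ℝ) :
    ∑ i, f (hA.eigenvalues i) = ∑ i, f (a i) := by
  have hdiag : A.charpoly.roots = Finset.univ.val.map fun i => (a i : ℂ) := by
    rw [h, charpoly_diagonal, roots_prod _ _ (by simp [Finset.prod_ne_zero_iff, X_sub_C_ne_zero])]
    simp
  have := congrArg (fun s => (s.map fun z : ℂ => f z.re).sum)
    (hA.roots_charpoly_eq_eigenvalues.symm.trans hdiag)
  simpa [Multiset.map_map, Function.comp_def] using this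

theorem traceNorm_nonneg {ι : Type*} [Fintype ι] [DecidableEq ι] (M : Matrix ι ι ℂ) :
    0 ≤ traceNorm M :=
  Finset.sum_nonneg fun _ _ => Real.sqrt_nonneg _

theorem traceNorm_diagonal {ι : Type*} [Fintype ι] [DecidableEq ι] (d : ι → ℂ) :
    traceNorm (diagonal d) = ∑ i, ‖d i‖ := by
  have h : (diagonal d)ᴴ * diagonal d = diagonal fun i => ((‖d i‖ ^ 2 : ℝ) : ℂ) := by
    rw [diagonal_conjTranspose, diagonal_mul_diagonal]
    congr 1; funext i
    simp [Complex.conj_mul']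
  rw [traceNorm, IsHermitian.sum_eigenvalues_eq_of_eq_diagonal _ h]
  simp

theorem deph_eq_diagonal {ι : Type*} [Fintype ι] [DecidableEq ι] (N : Matrix ι ι ℂ) :
    deph N = diagonal N.diag := by
  ext i j
  by_cases h : i = j <;> simp [deph, h]

theorem traceNorm_deph {ι : Type*} [Fintype ι] [DecidableEq ι] (N : Matrix ι ι ℂ) :
    traceNorm (deph N) = ∑ i, ‖N i i‖ := by
  rw [deph_eq_diagonal, traceNorm_diagonal]; rfl

theorem Matrix.PosSemidef.norm_apply_sq_le {n : Type*} [Fintype n] {A : Matrix n n ℂ}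
    (hA : A.PosSemidef) (p q : n) : ‖A p q‖ ^ 2 ≤ (A p p).re * (A q q).re := by
  classical
  have hdet := (hA.submatrix ![p, q]).det_nonneg
  simp only [det_fin_two, submatrix_apply, Matrix.cons_val_zero, Matrix.cons_val_one] at hdet
  rw [← hA.1.apply q p, Complex.star_def, Complex.mul_conj'] at hdet
  have hp := Complex.nonneg_iff.1 (hA.diag_nonneg (i := p))
  have hq := Complex.nonneg_iff.1 (hA.diag_nonneg (i := q))
  have := (Complex.nonneg_iff.1 hdet).1
  simp [Complex.mul_re, ← hp.2, ← hq.2] at this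
  exact_mod_cast this

section Superoperators

variable {m k : Type*} [Fintype m] [DecidableEq m] [Fintype k] [DecidableEq k]

theorem apply_eq_sum_apply_single (L : SO m k) (X : Matrix m m ℂ) (p q : k) :
    L X p q = ∑ j, ∑ l, X j l * L (single j l 1) p q := by
  conv_lhs => rw [matrix_eq_sum_single X]
  simp only [map_sum, Matrix.sum_apply]
  refine Finset.sum_congr rfl fun j _ => Finset.sum_congr rfl fun l _ => ?_
  rw [← smul_eq_mul, ← Matrix.smul_apply, ← map_smul, smul_single, smul_eq_mul, mul_one]

theorem IsChannel.trace_apply_single {Φ : SO m k} (hΦ : IsChannel Φ) (j : m) :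
    (Φ (single j j 1)).trace = 1 := by
  rw [hΦ.2, trace_single_eq_same]

theorem IsChannel.apply_single_apply_self_nonneg {Φ : SO m k} (hΦ : IsChannel Φ) (j : m)
    (p : k) : 0 ≤ Φ (single j j 1) p p :=
  hΦ.1.diag_nonneg (i := (p, j))

theorem IsDI.apply_diag_eq_sum {Φ : SO m k} (hDI : IsDI Φ) (M : Matrix m m ℂ) (i : k) :
    Φ M i i = ∑ j, M j j * Φ (single j j 1) i i := by
  have h := congrArg (fun Ψ : SO m k => Ψ M i i) hDI
  simp only [LinearMap.comp_apply, deph_eq_diagonal, diagonal_apply_eq, diag_apply] at h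
  rw [h, apply_eq_sum_apply_single]
  refine Finset.sum_congr rfl fun j _ => ?_
  simp [diagonal_apply]

theorem IsChannel.traceNorm_deph_apply_le_of_isDI {Φ : SO m k} (hΦ : IsChannel Φ)
    (hDI : IsDI Φ) (M : Matrix m m ℂ) : traceNorm (deph (Φ M)) ≤ traceNorm (deph M) := by
  rw [traceNorm_deph, traceNorm_deph]
  calc ∑ i, ‖Φ M i i‖ ≤ ∑ i, ∑ j, ‖M j j‖ * (Φ (single j j 1) i i).re := by
        refine Finset.sum_le_sum fun i _ => ?_
        rw [hDI.apply_diag_eq_sum]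
        refine (norm_sum_le _ _).trans (le_of_eq (Finset.sum_congr rfl fun j _ => ?_))
        rw [norm_mul, ← Complex.ofReal_re ‖Φ (single j j 1) i i‖,
          Complex.norm_of_nonneg' (hΦ.apply_single_apply_self_nonneg j i)]
    _ = ∑ j, ‖M j j‖ * ((Φ (single j j 1)).trace).re := by
        rw [Finset.sum_comm]
        simp [trace, Complex.re_sum, Finset.mul_sum]
    _ = ∑ j, ‖M j j‖ := by simp [hΦ.trace_apply_single]

section SupNorm

attribute [local instance] Matrix.normedAddCommGroup Matrix.normedSpace

theorem Matrix.PosSemidef.norm_apply_le_one {n : Type*} [Fintype n] {A : Matrix n n ℂ}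
    (hA : A.PosSemidef) (hdiag : ∀ i, (A i i).re ≤ 1) (p q : n) : ‖A p q‖ ≤ 1 := by
  have hq := (Complex.nonneg_iff.1 (hA.diag_nonneg (i := q))).1
  refine (pow_le_one_iff_of_nonneg (norm_nonneg _) two_ne_zero).1 ?_
  calc ‖A p q‖ ^ 2 ≤ (A p p).re * (A q q).re := hA.norm_apply_sq_le p q
    _ ≤ 1 := mul_le_one₀ (hdiag p) hq (hdiag q)

theorem IsState.norm_le_one {n : Type*} [Fintype n] {ρ : Matrix n n ℂ} (hρ : IsState ρ) :
    ‖ρ‖ ≤ 1 := by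
  refine (norm_le_iff zero_le_one).2 (hρ.1.norm_apply_le_one fun i => ?_)
  have h : ρ i i ≤ ρ.trace :=
    Finset.single_le_sum (fun j _ => hρ.1.diag_nonneg (i := j)) (Finset.mem_univ i)
  simpa [hρ.2] using (Complex.le_def.1 h).1

theorem IsChannel.norm_apply_single_le_one {Φ : SO m k} (hΦ : IsChannel Φ) (j l : m)
    (p q : k) : ‖Φ (single j l 1) p q‖ ≤ 1 := by
  refine hΦ.1.norm_apply_le_one (fun ⟨p, j⟩ => ?_) (p, j) (q, l)
  change (Φ (single j j 1) p p).re ≤ 1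
  have h : Φ (single j j 1) p p ≤ (Φ (single j j 1)).trace :=
    Finset.single_le_sum (fun p' _ => hΦ.apply_single_apply_self_nonneg j p') (Finset.mem_univ p)
  simpa [hΦ.trace_apply_single] using (Complex.le_def.1 h).1

theorem IsChannel.norm_apply_le {Φ : SO m k} (hΦ : IsChannel Φ) (X : Matrix m m ℂ) :
    ‖Φ X‖ ≤ Fintype.card m ^ 2 * ‖X‖ := by
  refine (norm_le_iff (by positivity)).2 fun p q => ?_
  calc ‖Φ X p q‖ ≤ ∑ _j : m, ∑ _l : m, ‖X‖ := by
        rw [apply_eq_sum_apply_single]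
        refine norm_sum_le_of_le _ fun j _ => norm_sum_le_of_le _ fun l _ => ?_
        rw [norm_mul, ← mul_one ‖X‖]
        exact mul_le_mul (norm_entry_le_entrywise_sup_norm X)
          (hΦ.norm_apply_single_le_one j l p q) (norm_nonneg _) (norm_nonneg _)
    _ = Fintype.card m ^ 2 * ‖X‖ := by simp [sq, mul_assoc]

theorem traceNorm_deph_le_card_mul_norm (N : Matrix m m ℂ) :
    traceNorm (deph N) ≤ Fintype.card m * ‖N‖ := by
  rw [traceNorm_deph]
  simpa using Finset.sum_le_sum fun i (_ : i ∈ Finset.univ) => norm_entry_le_entrywise_sup_norm N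

theorem exists_traceNorm_deph_apply_channel_state_le {n : Type*} [Fintype n] [DecidableEq n]
    (Θ : SO m k) (D : SO n n) :
    ∃ C, ∀ (Φ : SO n m) (ρ : Matrix n n ℂ), IsChannel Φ → IsState ρ →
      traceNorm (deph (Θ (Φ (D ρ)))) ≤ C := by
  obtain ⟨CΘ, hCΘ, hΘ⟩ := (LinearMap.toContinuousLinearMap Θ).bound
  obtain ⟨CD, hCD, hD⟩ := (LinearMap.toContinuousLinearMap D).bound
  refine ⟨Fintype.card k * (CΘ * (Fintype.card n ^ 2 * CD)), fun Φ ρ hΦ hρ => ?_⟩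
  calc traceNorm (deph (Θ (Φ (D ρ))))
      ≤ Fintype.card k * ‖Θ (Φ (D ρ))‖ := traceNorm_deph_le_card_mul_norm _
    _ ≤ Fintype.card k * (CΘ * ‖Φ (D ρ)‖) := by gcongr; exact hΘ _
    _ ≤ Fintype.card k * (CΘ * (Fintype.card n ^ 2 * ‖D ρ‖)) := by
        gcongr; exact hΦ.norm_apply_le _
    _ ≤ Fintype.card k * (CΘ * (Fintype.card n ^ 2 * CD)) := by
        gcongr
        exact (hD ρ).trans (mul_le_of_le_one_right hCD.le hρ.norm_le_one)

end SupNorm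

end Superoperators

theorem Mpre_left_monotone_general {α β γ δ : Type*} [Fintype α] [DecidableEq α]
    [Fintype β] [DecidableEq β] [Fintype γ] [DecidableEq γ]
    [Fintype δ] [DecidableEq δ]
    (lam : ℝ) (φ : α → ℝ)
    (Θ : SO β γ)
    (ΘDI : SO γ δ) (hΘDI : IsChannel ΘDI) (hDI : IsDI ΘDI) :
    Mpre lam φ (ΘDI ∘ₗ Θ) ≤ Mpre lam φ Θ := by
  obtain ⟨C, hC⟩ := exists_traceNorm_deph_apply_channel_state_le Θ (diffOp lam φ)
  refine sub_le_sub_right (Real.sSup_le ?_ (Real.sSup_nonneg ?_)) _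
  · rintro _ ⟨Φ, ρ, hΦ, hΦDI, hρ, rfl⟩
    exact (hΘDI.traceNorm_deph_apply_le_of_isDI hDI _).trans
      (le_csSup ⟨C, by rintro _ ⟨Φ, ρ, hΦ, -, hρ, rfl⟩; exact hC Φ ρ hΦ hρ⟩
        ⟨Φ, ρ, hΦ, hΦDI, hρ, rfl⟩)
  · rintro _ ⟨-, -, -, -, -, rfl⟩
    exact traceNorm_nonneg _

/-- monotonicity under left composition with detection incoherent channels. -/
theorem Mpre_left_monotone {α β γ δ : Type*} [Fintype α] [DecidableEq α] [Nonempty α]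
    [Fintype β] [DecidableEq β] [Nonempty β] [Fintype γ] [DecidableEq γ] [Nonempty γ]
    [Fintype δ] [DecidableEq δ] [Nonempty δ]
    (lam : ℝ) (hlam : lam ∈ Set.Icc (0 : ℝ) 1) (φ : α → ℝ)
    (Θ : SO β γ) (hΘ : IsChannel Θ)
    (ΘDI : SO γ δ) (hΘDI : IsChannel ΘDI) (hDI : IsDI ΘDI) :
    Mpre lam φ (ΘDI ∘ₗ Θ) ≤ Mpre lam φ Θ :=
  Mpre_left_monotone_general lam φ Θ ΘDI hΘDI hDI
end

section
/- The set of bipartite operators X_{AB} = (id^A ⊗ Φ^{B←A}) Σ_{i,j} ρ_{i,j} |ii⟩⟨jj|_{AA}, where Φ ranges over detection incoherent channels and ρ over quantum states, equals the set of operators Y_{AB} ≥ 0 with tr_B Y = Δ(σ_A) for some state σ_A and with diag(⟨i|_A Y |j⟩_A) = 0 for all i ≠ j (i.e., the B-diagonal of every off-diagonal A-block vanishes). -/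
open Matrix Complex
open scoped ComplexOrder

/-! The operator `(id ⊗ Φ) ∑ ρᵢⱼ |ii⟩⟨jj|` is the Schur product of `ρ ⊗ J` (`J` the all-ones
matrix on `B`) with the reindexed Choi matrix of `Φ`, hence positive; trace preservation makes its
partial trace over `B` equal to `Δρ`, and detection incoherence of `Φ` says exactly that
`⟨b| Φ(|i⟩⟨j|) |b⟩ = 0` for `i ≠ j`.

Conversely, for `Y` in the right-hand set let `pᵢ = ∑_b Y_{(i,b),(i,b)}`. Take the pure state
`ρᵢⱼ = √(pᵢ pⱼ)` and the channel whose Choi matrix has entries `Y_{(i,b),(j,b')} / √(pᵢ pⱼ)`,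
completed by a fixed output state on the blocks with `pᵢ = 0`. Positivity of `Y` forces the rows
and columns of such blocks to vanish, so the construction recovers `Y`. -/

theorem Matrix.PosSemidef.apply_eq_zero_of_diag_eq_zero {𝕜 n : Type*} [RCLike 𝕜] [Fintype n]
    [DecidableEq n] {M : Matrix n n 𝕜} (hM : M.PosSemidef) {i : n} (hi : M i i = 0) (j : n) :
    M j i = 0 ∧ M i j = 0 := by
  have hcol : M *ᵥ Pi.single i 1 = 0 :=
    (hM.dotProduct_mulVec_zero_iff _).mp (by simpa [mulVec_single_one] using hi)
  have hji : M j i = 0 := by simpa [mulVec_single_one] using congrFun hcol j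
  exact ⟨hji, by rw [← hM.isHermitian.apply i j, hji, star_zero]⟩

section Superoperator

variable {ι κ : Type*} [Fintype ι] [DecidableEq ι] [Fintype κ] [DecidableEq κ]

lemma deph_apply (M : Matrix ι ι ℂ) (i j : ι) : deph M i j = if i = j then M i j else 0 := rfl

lemma trace_deph (M : Matrix ι ι ℂ) : (deph M).trace = M.trace := by
  simp [Matrix.trace, deph_apply]

lemma deph_eq_zero_iff (M : Matrix ι ι ℂ) : deph M = 0 ↔ ∀ i, M i i = 0 := by
  refine ⟨fun h i => by simpa [deph_apply] using congrFun (congrFun h i) i, fun h => ?_⟩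
  ext i j
  by_cases hij : i = j
  · subst hij; simp [deph_apply, h]
  · simp [deph_apply, hij]

lemma deph_single_self (i : ι) : deph (single i i (1 : ℂ)) = single i i 1 := by
  ext k l
  simp only [deph_apply, single_apply]
  grind

lemma deph_single_of_ne {i j : ι} (h : i ≠ j) : deph (single i j (1 : ℂ)) = 0 :=
  (deph_eq_zero_iff _).2 fun k => by
    rw [single_apply, if_neg]
    rintro ⟨rfl, rfl⟩
    exact h rfl

lemma trace_single_one (i j : ι) : (single i j (1 : ℂ)).trace = if i = j then 1 else 0 := by
  split_ifs with hij
  · subst hij; exact trace_single_eq_same _ _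
  · exact trace_single_eq_of_ne _ _ _ hij

lemma trace_preserving_iff_single (Φ : SO ι κ) :
    (∀ ρ, (Φ ρ).trace = ρ.trace) ↔ ∀ i j, (Φ (single i j 1)).trace = (single i j 1).trace := by
  refine ⟨fun h i j => h _, fun h => ?_⟩
  suffices traceLinearMap κ ℂ ℂ ∘ₗ Φ = traceLinearMap ι ℂ ℂ from
    fun ρ => LinearMap.congr_fun this ρ
  exact ext_linearMap ℂ fun i j => LinearMap.ext_ring (h i j)

lemma isDI_iff (Φ : SO ι κ) : IsDI Φ ↔ ∀ i j, i ≠ j → ∀ b, Φ (single i j 1) b b = 0 := by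
  refine ⟨fun h i j hij => ?_, fun h => ext_linearMap ℂ fun i j => LinearMap.ext_ring ?_⟩
  · have := LinearMap.congr_fun h (single i j 1)
    simp only [LinearMap.comp_apply, deph_single_of_ne hij, map_zero] at this
    exact (deph_eq_zero_iff _).1 this
  · by_cases hij : i = j
    · subst hij; simp [deph_single_self]
    · simp [deph_single_of_ne hij, (deph_eq_zero_iff _).2 (h i j hij)]

def ofChoi (C : Matrix (κ × ι) (κ × ι) ℂ) : SO ι κ where
  toFun M := of fun b b' => ∑ i, ∑ j, C (b, i) (b', j) * M i j
  map_add' M N := by ext; simp [mul_add, Finset.sum_add_distrib]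
  map_smul' c M := by ext; simp [Finset.mul_sum, mul_left_comm]

lemma ofChoi_single (C : Matrix (κ × ι) (κ × ι) ℂ) (i j : ι) (b b' : κ) :
    ofChoi C (single i j 1) b b' = C (b, i) (b', j) := by
  simp [ofChoi, single_apply, ite_and]

lemma choi_ofChoi (C : Matrix (κ × ι) (κ × ι) ℂ) : choi (ofChoi C) = C := by
  ext ⟨b, i⟩ ⟨b', j⟩
  exact ofChoi_single C i j b b'

end Superoperator

section MaxCorr

variable {ι κ : Type*} [Fintype ι] [DecidableEq ι] [Fintype κ] [DecidableEq κ]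

def idTensorOnMaxCorr (Φ : SO ι κ) (ρ : Matrix ι ι ℂ) : Matrix (ι × κ) (ι × κ) ℂ :=
  of fun p q => ρ p.1 q.1 * Φ (single p.1 q.1 1) p.2 q.2

def partialTraceRight (Y : Matrix (ι × κ) (ι × κ) ℂ) : Matrix ι ι ℂ :=
  of fun i j => ∑ b, Y (i, b) (j, b)

lemma idTensorOnMaxCorr_eq_hadamard (Φ : SO ι κ) (ρ : Matrix ι ι ℂ) :
    idTensorOnMaxCorr Φ ρ =
      ρ.submatrix Prod.fst Prod.fst ⊙ (choi Φ).submatrix Prod.swap Prod.swap := rfl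

lemma posSemidef_idTensorOnMaxCorr {Φ : SO ι κ} {ρ : Matrix ι ι ℂ}
    (hΦ : (choi Φ).PosSemidef) (hρ : ρ.PosSemidef) : (idTensorOnMaxCorr Φ ρ).PosSemidef := by
  rw [idTensorOnMaxCorr_eq_hadamard]
  exact (hρ.submatrix _).hadamard (hΦ.submatrix _)

lemma partialTraceRight_idTensorOnMaxCorr {Φ : SO ι κ} (hΦ : ∀ ρ, (Φ ρ).trace = ρ.trace)
    (ρ : Matrix ι ι ℂ) : partialTraceRight (idTensorOnMaxCorr Φ ρ) = deph ρ := by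
  ext i j
  have htr : ∑ b, Φ (single i j 1) b b = if i = j then 1 else 0 := by
    rw [← trace_single_one, ← hΦ]; rfl
  simp only [partialTraceRight, idTensorOnMaxCorr, of_apply, ← Finset.mul_sum, htr, deph_apply]
  split_ifs <;> simp

lemma idTensorOnMaxCorr_apply_of_ne {Φ : SO ι κ} (hΦ : IsDI Φ) (ρ : Matrix ι ι ℂ) {i j : ι}
    (hij : i ≠ j) (b : κ) : idTensorOnMaxCorr Φ ρ (i, b) (j, b) = 0 := by
  simp [idTensorOnMaxCorr, (isDI_iff Φ).1 hΦ i j hij b]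

end MaxCorr

section Recovery

variable {ι κ : Type*} [Fintype ι] [DecidableEq ι] [Fintype κ] [DecidableEq κ]

noncomputable def sqrtBlockTrace (Y : Matrix (ι × κ) (ι × κ) ℂ) (i : ι) : ℝ :=
  √(partialTraceRight Y i i).re

/-- On a block with `sqrtBlockTrace Y i = 0` the factor `(sqrtBlockTrace Y i)⁻¹` is `0`, and the
diagonal term makes the channel output `|b₀⟩⟨b₀|` there instead. -/
noncomputable def recoveryChoi (Y : Matrix (ι × κ) (ι × κ) ℂ) (b₀ : κ) :
    Matrix (κ × ι) (κ × ι) ℂ :=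
  let d : κ × ι → ℂ := fun q => ((sqrtBlockTrace Y q.2)⁻¹ : ℝ)
  Y.submatrix Prod.swap Prod.swap ⊙ vecMulVec d (star d) +
    diagonal fun q => if q.1 = b₀ ∧ sqrtBlockTrace Y q.2 = 0 then 1 else 0

noncomputable def recoveryState (Y : Matrix (ι × κ) (ι × κ) ℂ) : Matrix ι ι ℂ :=
  vecMulVec (fun i => (sqrtBlockTrace Y i : ℂ)) (star fun i => (sqrtBlockTrace Y i : ℂ))

omit [Fintype ι] in
lemma recoveryChoi_apply (Y : Matrix (ι × κ) (ι × κ) ℂ) (b₀ : κ) (i j : ι) (b b' : κ) :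
    recoveryChoi Y b₀ (b, i) (b', j) =
      Y (i, b) (j, b') * ((sqrtBlockTrace Y i)⁻¹ * (sqrtBlockTrace Y j)⁻¹ : ℝ) +
        if i = j ∧ b = b' ∧ b = b₀ ∧ sqrtBlockTrace Y i = 0 then 1 else 0 := by
  simp only [recoveryChoi, ofReal_inv, Matrix.add_apply, hadamard_apply, submatrix_apply,
    Prod.swap_prod_mk, vecMulVec_apply, Pi.star_apply, star_inv₀, RCLike.star_def, conj_ofReal,
    diagonal_apply, Prod.mk.injEq, ofReal_mul, add_right_inj]
  grind

variable {Y : Matrix (ι × κ) (ι × κ) ℂ}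

omit [Fintype ι] [DecidableEq ι] [DecidableEq κ] in
lemma ofReal_sqrtBlockTrace_sq (hY : Y.PosSemidef) (i : ι) :
    (sqrtBlockTrace Y i : ℂ) ^ 2 = partialTraceRight Y i i := by
  have h : 0 ≤ partialTraceRight Y i i := Finset.sum_nonneg fun b _ => hY.diag_nonneg
  rw [← Complex.ofReal_pow, sqrtBlockTrace, Real.sq_sqrt (Complex.nonneg_iff.1 h).1]
  exact Complex.ext rfl (Complex.nonneg_iff.1 h).2

lemma apply_eq_zero_of_sqrtBlockTrace_eq_zero (hY : Y.PosSemidef) {i : ι}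
    (hi : sqrtBlockTrace Y i = 0) (b : κ) (q : ι × κ) : Y q (i, b) = 0 ∧ Y (i, b) q = 0 := by
  have hsum : ∑ b, Y (i, b) (i, b) = 0 := by
    simpa [hi, partialTraceRight] using (ofReal_sqrtBlockTrace_sq hY i).symm
  refine hY.apply_eq_zero_of_diag_eq_zero ?_ q
  exact (Finset.sum_eq_zero_iff_of_nonneg fun b _ => hY.diag_nonneg).1 hsum b (Finset.mem_univ b)

lemma posSemidef_recoveryChoi (hY : Y.PosSemidef) (b₀ : κ) : (recoveryChoi Y b₀).PosSemidef := by
  refine ((hY.submatrix _).hadamard (posSemidef_vecMulVec_self_star _)).add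
    (PosSemidef.diagonal fun q => ?_)
  dsimp only
  split_ifs <;> simp

omit [Fintype ι] in
lemma sum_recoveryChoi_apply (hY : Y.PosSemidef) (hoff : ∀ i j, i ≠ j → ∀ b, Y (i, b) (j, b) = 0)
    (b₀ : κ) (i j : ι) :
    ∑ b, recoveryChoi Y b₀ (b, i) (b, j) = if i = j then 1 else 0 := by
  by_cases hij : i = j
  · subst hij
    have hsq := ofReal_sqrtBlockTrace_sq hY i
    by_cases ha : sqrtBlockTrace Y i = 0
    · simp [recoveryChoi_apply, ha]
    · simp only [partialTraceRight, of_apply] at hsq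
      simp only [recoveryChoi_apply, ofReal_mul, ofReal_inv, ha, and_false, ↓reduceIte, add_zero,
        ← Finset.sum_mul, ← hsq]
      field_simp
  · simp [recoveryChoi_apply, hoff i j hij, hij]

lemma isChannel_ofChoi_recoveryChoi (hY : Y.PosSemidef)
    (hoff : ∀ i j, i ≠ j → ∀ b, Y (i, b) (j, b) = 0) (b₀ : κ) :
    IsChannel (ofChoi (recoveryChoi Y b₀)) := by
  refine ⟨by rw [choi_ofChoi]; exact posSemidef_recoveryChoi hY b₀,
    (trace_preserving_iff_single _).2 fun i j => ?_⟩
  rw [trace_single_one, ← sum_recoveryChoi_apply hY hoff b₀]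
  simp [Matrix.trace, ofChoi_single]

lemma isDI_ofChoi_recoveryChoi (hoff : ∀ i j, i ≠ j → ∀ b, Y (i, b) (j, b) = 0) (b₀ : κ) :
    IsDI (ofChoi (recoveryChoi Y b₀)) :=
  (isDI_iff _).2 fun i j hij b => by simp [ofChoi_single, recoveryChoi_apply, hoff i j hij, hij]

lemma idTensorOnMaxCorr_recovery (hY : Y.PosSemidef) (b₀ : κ) :
    idTensorOnMaxCorr (ofChoi (recoveryChoi Y b₀)) (recoveryState Y) = Y := by
  ext ⟨i, b⟩ ⟨j, b'⟩
  simp only [idTensorOnMaxCorr, recoveryState, of_apply, vecMulVec_apply, ofChoi_single,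
    recoveryChoi_apply]
  by_cases hi : sqrtBlockTrace Y i = 0
  · simp [hi, (apply_eq_zero_of_sqrtBlockTrace_eq_zero hY hi b (j, b')).2]
  by_cases hj : sqrtBlockTrace Y j = 0
  · simp [hj, (apply_eq_zero_of_sqrtBlockTrace_eq_zero hY hj b' (i, b)).1]
  simp only [Pi.star_apply, RCLike.star_def, conj_ofReal,
    ofReal_mul, ofReal_inv, hi, and_false, ↓reduceIte, add_zero]
  field_simp

end Recovery

theorem DI_state_set_eq_general {A B : Type*} [Fintype A] [DecidableEq A]
    [Fintype B] [DecidableEq B] [Nonempty B] :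
    {X : Matrix (A × B) (A × B) ℂ | ∃ (Φ : SO A B) (ρ : Matrix A A ℂ),
        IsChannel Φ ∧ IsDI Φ ∧ IsState ρ ∧
        X = Matrix.of fun p q =>
          ρ p.1 q.1 * Φ (Matrix.single p.1 q.1 1) p.2 q.2}
      = {Y : Matrix (A × B) (A × B) ℂ | Y.PosSemidef ∧
          (∃ σ : Matrix A A ℂ, IsState σ ∧
            (Matrix.of fun i j : A => ∑ b, Y (i, b) (j, b)) = deph σ) ∧
          ∀ i j : A, i ≠ j → ∀ b : B, Y (i, b) (j, b) = 0} := by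
  ext Y
  constructor
  · rintro ⟨Φ, ρ, hΦ, hDI, hρ, rfl⟩
    exact ⟨posSemidef_idTensorOnMaxCorr hΦ.1 hρ.1,
      ⟨ρ, hρ, partialTraceRight_idTensorOnMaxCorr hΦ.2 ρ⟩,
      fun i j hij b => idTensorOnMaxCorr_apply_of_ne hDI ρ hij b⟩
  · rintro ⟨hY, ⟨σ, hσ, hptr⟩, hoff⟩
    let b₀ : B := Classical.arbitrary B
    let Φ := ofChoi (recoveryChoi Y b₀)
    let ρ := recoveryState Y
    have hΦ : IsChannel Φ := isChannel_ofChoi_recoveryChoi hY hoff b₀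
    have hX : idTensorOnMaxCorr Φ ρ = Y := idTensorOnMaxCorr_recovery hY b₀
    have hdeph : deph ρ = deph σ := by
      rw [← partialTraceRight_idTensorOnMaxCorr hΦ.2, hX]
      exact hptr
    refine ⟨Φ, ρ, hΦ, isDI_ofChoi_recoveryChoi hoff b₀,
      ⟨posSemidef_vecMulVec_self_star _, ?_⟩, hX.symm⟩
    rw [← trace_deph, hdeph, trace_deph, hσ.2]

/-- characterization of the operators `(id ⊗ Φ) Σ ρ_{ij} |ii⟩⟨jj|` for a
detection incoherent channel `Φ` and a state `ρ`: they are exactly the PSD operators whose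
partial trace over `B` is a diagonal state and whose off-diagonal `A`-blocks have vanishing
`B`-diagonal. -/
theorem DI_state_set_eq {A B : Type*} [Fintype A] [DecidableEq A] [Nonempty A]
    [Fintype B] [DecidableEq B] [Nonempty B] :
    {X : Matrix (A × B) (A × B) ℂ | ∃ (Φ : SO A B) (ρ : Matrix A A ℂ),
        IsChannel Φ ∧ IsDI Φ ∧ IsState ρ ∧
        X = Matrix.of fun p q =>
          ρ p.1 q.1 * Φ (Matrix.single p.1 q.1 1) p.2 q.2}
      = {Y : Matrix (A × B) (A × B) ℂ | Y.PosSemidef ∧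
          (∃ σ : Matrix A A ℂ, IsState σ ∧
            (Matrix.of fun i j : A => ∑ b, Y (i, b) (j, b)) = deph σ) ∧
          ∀ i j : A, i ≠ j → ∀ b : B, Y (i, b) (j, b) = 0} :=
  DI_state_set_eq_general
end
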